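/- Let α > 0 and l ∈ ℕ. Then there exist l' ∈ ℕ and C > 0 such that: for every entire function f : ℂ → ℂ with N := sup_{z∈ℂ} |f(z)| · exp(−2^{−l'}·|z|^α) < ∞, the Taylor coefficients (c_n)_{n≥0} of f at 0 satisfy Σ_{n=0}^∞ (n!)^{1/α} · 2^{l·n} · |c_n| ≤ C · N. -/

import Mathlib

/-!
Cauchy's estimate on the circle of radius `r` gives `‖cₙ‖ ≤ N exp (δ rᵅ) / rⁿ`, where `δ = 2^{-l'}`.
The radius minimising the right-hand side, `rᵅ = n / (α δ)`, together with `n! ≤ nⁿ`, yields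
`(n!)^{1/α} ‖cₙ‖ ≤ N ((e α δ)^{1/α})ⁿ`. Taking `l'` so large that `2ˡ (e α δ)^{1/α} ≤ 1/2`, the
weighted coefficients are dominated by the geometric sequence `N 2⁻ⁿ`.
-/

open Metric Real Filter Topology FormalMultilinearSeries
open scoped Nat

section PowerSeries

variable {𝕜 : Type*} [RCLike 𝕜] {f : 𝕜 → 𝕜} {c : ℕ → 𝕜}

lemma hasFPowerSeriesOnBall_ofScalars_of_forall_hasSum
    (hf : ∀ z, HasSum (fun n ↦ c n * z ^ n) (f z)) :
    HasFPowerSeriesOnBall f (ofScalars 𝕜 c) 0 ⊤ where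
  r_le := by
    refine ((ofScalars 𝕜 c).radius_eq_top_of_summable_norm fun r ↦ ?_).ge
    simpa [ofScalars_norm] using (hf ((r : ℝ) : 𝕜)).summable.norm
  r_pos := ENNReal.zero_lt_top
  hasSum {y} _ := by
    simpa [ofScalars_apply_eq, mul_comm] using hf y

lemma coeff_eq_iteratedDeriv_div_factorial_of_forall_hasSum
    (hf : ∀ z, HasSum (fun n ↦ c n * z ^ n) (f z)) (n : ℕ) :
    c n = iteratedDeriv n f 0 / n ! := by
  have hp := hasFPowerSeriesOnBall_ofScalars_of_forall_hasSum hf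
  exact congrFun ((ofScalars_series_injective 𝕜 𝕜)
    (hp.hasFPowerSeriesAt.eq_formalMultilinearSeries hp.analyticAt.hasFPowerSeriesAt)) n

end PowerSeries

lemma norm_coeff_le_of_forall_mem_sphere_norm_le {f : ℂ → ℂ} {c : ℕ → ℂ}
    (hf : ∀ z, HasSum (fun n ↦ c n * z ^ n) (f z)) {r M : ℝ} (hr : 0 < r)
    (hM : ∀ z ∈ sphere (0 : ℂ) r, ‖f z‖ ≤ M) (n : ℕ) :
    ‖c n‖ ≤ M / r ^ n := by
  have hp := hasFPowerSeriesOnBall_ofScalars_of_forall_hasSum hf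
  have hdiff : Differentiable ℂ f := fun z ↦
    (hp.analyticAt_of_mem (by simp)).differentiableAt
  have hcauchy := Complex.norm_iteratedDeriv_le_of_forall_mem_sphere_norm_le n hr
    hdiff.diffContOnCl hM
  rw [coeff_eq_iteratedDeriv_div_factorial_of_forall_hasSum hf, norm_div, Complex.norm_natCast,
    div_le_iff₀ (by positivity)]
  rwa [mul_comm, ← mul_div_assoc]

lemma factorial_mul_exp_div_pow_le {n : ℕ} (hn : n ≠ 0) {t : ℝ} (ht : 0 < t) :
    n ! * exp n / (n / t) ^ n ≤ (exp 1 * t) ^ n := by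
  rw [div_pow, div_div_eq_mul_div, div_le_iff₀ (by positivity), ← exp_one_pow, mul_pow]
  calc (n ! : ℝ) * exp 1 ^ n * t ^ n ≤ n ^ n * exp 1 ^ n * t ^ n := by
        gcongr; exact_mod_cast n.factorial_le_pow
    _ = _ := by ring

lemma factorial_rpow_mul_norm_coeff_le {f : ℂ → ℂ} {c : ℕ → ℂ}
    (hf : ∀ z, HasSum (fun n ↦ c n * z ^ n) (f z)) {α δ N : ℝ} (hα : 0 < α) (hδ : 0 < δ)
    (hN : ∀ z, ‖f z‖ * exp (-δ * ‖z‖ ^ α) ≤ N) (n : ℕ) :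
    (n ! : ℝ) ^ (1 / α) * ‖c n‖ ≤ N * ((exp 1 * α * δ) ^ (1 / α)) ^ n := by
  have hN0 : 0 ≤ N := (mul_nonneg (norm_nonneg _) (exp_pos _).le).trans (hN 0)
  rcases eq_or_ne n 0 with rfl | hn
  · simpa [coeff_eq_iteratedDeriv_div_factorial_of_forall_hasSum hf 0, zero_rpow hα.ne']
      using hN 0
  set u : ℝ := n / (α * δ)
  have hu : 0 < u := by positivity
  set r : ℝ := u ^ (1 / α)
  have hsphere : ∀ z ∈ sphere (0 : ℂ) r, ‖f z‖ ≤ N * exp (n / α) := fun z hz ↦ by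
    have hδu : δ * ‖z‖ ^ α = n / α := by
      rw [mem_sphere_zero_iff_norm.1 hz, ← rpow_mul hu.le, one_div_mul_cancel hα.ne', rpow_one]
      simp only [u]
      field_simp
    have := mul_le_mul_of_nonneg_right (hN z) (exp_pos (n / α)).le
    rwa [mul_assoc, ← exp_add, neg_mul, hδu, neg_add_cancel, exp_zero, mul_one] at this
  calc (n ! : ℝ) ^ (1 / α) * ‖c n‖
      ≤ (n ! : ℝ) ^ (1 / α) * (N * exp (n / α) / r ^ n) := by
        gcongr; exact norm_coeff_le_of_forall_mem_sphere_norm_le hf (by positivity) hsphere n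
    _ = N * (n ! * exp n / u ^ n) ^ (1 / α) := by
        rw [div_rpow (by positivity) (by positivity), mul_rpow (by positivity) (exp_pos _).le,
          ← rpow_pow_comm hu.le, ← exp_mul, div_eq_mul_one_div (n : ℝ) α]
        ring
    _ ≤ N * ((exp 1 * α * δ) ^ n) ^ (1 / α) := by
        rw [mul_assoc (exp 1)]
        gcongr
        exact factorial_mul_exp_div_pow_le hn (by positivity)
    _ = N * ((exp 1 * α * δ) ^ (1 / α)) ^ n := by
        rw [rpow_pow_comm (by positivity)]

lemma exists_rpow_mul_inv_two_pow_lt {α ε : ℝ} (hα : 0 < α) (hε : 0 < ε) :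
    ∃ k : ℕ, (exp 1 * α * ((2 : ℝ) ^ k)⁻¹) ^ (1 / α) < ε := by
  have hlim : Tendsto (fun k : ℕ ↦ (exp 1 * α * ((2 : ℝ) ^ k)⁻¹) ^ (1 / α)) atTop (𝓝 0) := by
    have h := (tendsto_inv_atTop_zero.comp
      (tendsto_pow_atTop_atTop_of_one_lt one_lt_two)).const_mul (exp 1 * α)
    simpa [zero_rpow (inv_pos.2 hα).ne'] using h.rpow_const (p := 1 / α) (Or.inr (by positivity))
  exact (hlim.eventually (gt_mem_nhds hε)).exists

lemma summable_and_tsum_le_of_le_geometric {a : ℕ → ℝ} {N r : ℝ} (ha : ∀ n, 0 ≤ a n)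
    (hr₀ : 0 ≤ r) (hr₁ : r < 1) (h : ∀ n, a n ≤ N * r ^ n) :
    Summable a ∧ ∑' n, a n ≤ N * (1 - r)⁻¹ := by
  have hg := (summable_geometric_of_lt_one hr₀ hr₁).mul_left N
  have hs := hg.of_nonneg_of_le ha h
  refine ⟨hs, ?_⟩
  rw [← tsum_geometric_of_lt_one hr₀ hr₁, ← tsum_mul_left]
  exact hs.tsum_le_tsum h hg

/-- One-dimensional case of Lemma A.2: a growth bound of order `α` and small
type yields an ℓ¹-type bound on the weighted Taylor coefficients. -/
theorem growth_implies_weighted_coeff_summable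
    (α : ℝ) (hα : 0 < α) (l : ℕ) :
    ∃ (l' : ℕ) (C : ℝ), 0 < C ∧
      ∀ (f : ℂ → ℂ) (c : ℕ → ℂ),
        (∀ z : ℂ, HasSum (fun n : ℕ => c n * z ^ n) (f z)) →
        ∀ N : ℝ,
          (∀ z : ℂ, ‖f z‖ *
              Real.exp (-((2 : ℝ) ^ (l' : ℕ))⁻¹ * ‖z‖ ^ α) ≤ N) →
          Summable (fun n : ℕ =>
            (n.factorial : ℝ) ^ (1 / α) * 2 ^ (l * n) * ‖c n‖) ∧
          ∑' n : ℕ, (n.factorial : ℝ) ^ (1 / α) * 2 ^ (l * n) * ‖c n‖ ≤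
            C * N := by
  obtain ⟨l', hl'⟩ := exists_rpow_mul_inv_two_pow_lt hα (ε := (2 ^ (l + 1))⁻¹) (by positivity)
  refine ⟨l', (1 - 2⁻¹)⁻¹, by norm_num, fun f c hf N hN ↦ ?_⟩
  have hN0 : 0 ≤ N := (mul_nonneg (norm_nonneg _) (exp_pos _).le).trans (hN 0)
  have hratio : 2 ^ l * (exp 1 * α * ((2 : ℝ) ^ l')⁻¹) ^ (1 / α) ≤ 2⁻¹ := by
    calc _ ≤ (2 : ℝ) ^ l * (2 ^ (l + 1))⁻¹ := by gcongr
      _ = 2⁻¹ := by rw [pow_succ, mul_inv, ← mul_assoc, mul_inv_cancel₀ (by positivity), one_mul]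
  rw [mul_comm _ N]
  refine summable_and_tsum_le_of_le_geometric (fun n ↦ by positivity) (by norm_num) (by norm_num)
    fun n ↦ ?_
  calc (n ! : ℝ) ^ (1 / α) * 2 ^ (l * n) * ‖c n‖
      = 2 ^ (l * n) * ((n ! : ℝ) ^ (1 / α) * ‖c n‖) := by ring
    _ ≤ 2 ^ (l * n) * (N * ((exp 1 * α * ((2 : ℝ) ^ l')⁻¹) ^ (1 / α)) ^ n) := by
        gcongr 2 ^ (l * n) * ?_
        exact factorial_rpow_mul_norm_coeff_le hf hα (by positivity) hN n
    _ = N * (2 ^ l * (exp 1 * α * ((2 : ℝ) ^ l')⁻¹) ^ (1 / α)) ^ n := by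
        rw [pow_mul, mul_pow]; ring
    _ ≤ N * 2⁻¹ ^ n := by gcongr
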